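/- arXiv:2503.16102 — 2 statements merged into one kernel-verified Lean document; each statement's English description precedes it below -/
import Mathlib

section
/- For every level datum L, the integer B_L is even. -/
open Finset

/-- The ramification order of a level datum: the least common denominator of its
elements, i.e. the lcm of the denominators (`ram ∅ = 1`). -/
def ram (L : Finset ℚ) : ℕ := L.lcm Rat.den

/-- The least common denominator `d` of the "initial segment" of `L` consisting of the
elements `≥ k` (the elements come in decreasing order `k₀ > k₁ > ⋯`). -/
def segLcm (L : Finset ℚ) (k : ℚ) : ℕ := (L.filter (fun x => k ≤ x)).lcm Rat.den

/-- A level datum: a finite set of positive rationals such that the least common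
denominators `d₀, d₁, …` of the initial segments (for the decreasing order) are all `≥ 2`
and form a strictly increasing sequence.  (Since the `d_j` are increasing, requiring
`d_j ≥ 2` for all `j` is equivalent to `d₀ ≥ 2`, i.e. to the largest element not being
an integer.) -/
def IsLevelDatum (L : Finset ℚ) : Prop :=
  (∀ k ∈ L, 0 < k) ∧
  (∀ k ∈ L, 2 ≤ segLcm L k) ∧
  (∀ k ∈ L, ∀ k' ∈ L, k' < k → segLcm L k < segLcm L k')

/-- The largest level of `L` (junk value `0` for `L = ∅`). -/
def maxLevel (L : Finset ℚ) : ℚ := WithBot.unbotD 0 L.max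

/-- The numerator `s(k) := k · Ram(L) ∈ ℤ` of a level `k` of `L`. -/
def numer (L : Finset ℚ) (k : ℚ) : ℤ := (k * (ram L : ℚ)).num

/-- `σ := k₀ · Ram(L) ∈ ℤ`, the numerator of the largest level. -/
def sigma0 (L : Finset ℚ) : ℤ := numer L (maxLevel L)

/-- `gcd(s(x) for x ∈ s, Ram L)` : the gcd of `Ram L` together with the numerators of the
elements of a subset `s ⊆ L`. -/
def gSeg (L : Finset ℚ) (s : Finset ℚ) : ℕ :=
  Nat.gcd (ram L) (s.gcd (fun x => (numer L x).natAbs))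

/-- The quantity
`B_L = (r − (s₀,r))·s₀ + Σᵢ ((s₀,…,s_{i−1},r) − (s₀,…,s_i,r))·s_i − r² + 1`
(`B_∅ = 0`), equal to the dimension of the elementary wild character variety. -/
def B (L : Finset ℚ) : ℤ :=
  (∑ k ∈ L, ((gSeg L (L.filter (fun x => k < x)) : ℤ)
      - (gSeg L (L.filter (fun x => k ≤ x)) : ℤ)) * numer L k)
    - (ram L : ℤ) ^ 2 + 1

/-- A level datum is locally minimal at infinity if it is empty, or its largest level is
`< 1` or `> 2`. -/
def LocallyMinimal (L : Finset ℚ) : Prop :=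
  L = ∅ ∨ maxLevel L < 1 ∨ 2 < maxLevel L

/-- Rescaling of a level datum by a factor `c`, removing the integer elements. -/
def rescale (L : Finset ℚ) (c : ℚ) : Finset ℚ :=
  (L.image (fun k => c * k)).filter (fun x => x.den ≠ 1)

/-- The local simplification map `S_∞` on level data: if the largest level `k₀` satisfies
`1 < k₀ < 2`, rescale all the levels by `ρ/(σ−ρ)` (where `ρ = Ram L`, `σ = k₀·ρ`) and
remove the integer levels; otherwise do nothing. -/
def Sinf (L : Finset ℚ) : Finset ℚ :=
  if 1 < maxLevel L ∧ maxLevel L < 2 then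
    rescale L ((ram L : ℚ) / ((sigma0 L : ℚ) - (ram L : ℚ)))
  else L

/-!
Write `g₋₁ = r` and `g_i = gcd(s₀, …, s_i, r) = gcd(s_i, g_{i-1})`. Modulo 2 every summand
`(g_{i-1} - g_i) s_i` of `B_L` is congruent to `g_{i-1} - g_i`: if `s_i` is even, then `g_i` and
`g_{i-1}` have the same parity. The sum of the `g_{i-1} - g_i` telescopes to `r - g_p = r - 1`,
because the lowest common denominator of the `s_i / r` is `r`. Hence `B_L ≡ r - r² ≡ 0 (mod 2)`.
-/

lemma Rat.den_dvd_of_mul_natCast_eq_intCast {q : ℚ} {n : ℕ} {m : ℤ} (hn : n ≠ 0)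
    (h : q * n = m) : q.den ∣ n := by
  have hq : q = Rat.divInt m n := by
    rw [Rat.divInt_eq_div, ← h]
    push_cast
    field_simp
  exact_mod_cast hq ▸ Rat.den_dvd m n

lemma Finset.sum_sub_filter_lt_filter_le {α M : Type*} [LinearOrder α] [AddCommGroup M]
    (f : Finset α → M) (T : Finset α) :
    ∑ k ∈ T, (f (T.filter (k < ·)) - f (T.filter (k ≤ ·))) = f ∅ - f T := by
  induction T using Finset.induction_on_min with
  | empty => simp
  | insert a T haT ih =>
    have ha_notMem : a ∉ T := fun h => lt_irrefl a (haT a h)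
    have hlt : (insert a T).filter (a < ·) = T := by
      rw [filter_insert, if_neg (lt_irrefl a), filter_true_of_mem fun x hx => haT x hx]
    have hle : (insert a T).filter (a ≤ ·) = insert a T := by
      rw [filter_insert, if_pos le_rfl, filter_true_of_mem fun x hx => (haT x hx).le]
    have hrest : ∀ k ∈ T, f ((insert a T).filter (k < ·)) - f ((insert a T).filter (k ≤ ·))
        = f (T.filter (k < ·)) - f (T.filter (k ≤ ·)) := fun k hk => by
      rw [filter_insert, filter_insert, if_neg (haT k hk).not_gt, if_neg (haT k hk).not_ge]
    rw [sum_insert ha_notMem, hlt, hle, sum_congr rfl hrest, ih]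
    abel

lemma Finset.filter_le_eq_insert_filter_lt {α : Type*} [LinearOrder α] {s : Finset α} {a : α}
    (ha : a ∈ s) : s.filter (a ≤ ·) = insert a (s.filter (a < ·)) := by
  ext x
  simp only [mem_filter, mem_insert, le_iff_eq_or_lt]
  grind

lemma even_sub_gcd_mul_sub_one (g : ℕ) (s : ℤ) :
    Even (((g : ℤ) - (s.natAbs.gcd g : ℕ)) * (s - 1)) := by
  rcases Int.even_or_odd s with hs | hs
  · refine Even.mul_right (Int.even_sub.mpr ?_) _
    rw [Int.even_coe_nat, Int.even_coe_nat, even_iff_two_dvd, even_iff_two_dvd]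
    exact ⟨fun hg => Nat.dvd_gcd (Int.natAbs_even.mpr hs).two_dvd hg,
      fun hgcd => hgcd.trans (Nat.gcd_dvd_right _ _)⟩
  · exact Even.mul_left (hs.sub_odd odd_one) _

lemma ram_pos (L : Finset ℚ) : 0 < ram L :=
  Nat.pos_of_ne_zero fun h => by
    obtain ⟨q, -, hq⟩ := Finset.lcm_eq_zero_iff.mp h
    exact q.den_nz hq

lemma den_dvd_ram {L : Finset ℚ} {k : ℚ} (hk : k ∈ L) : k.den ∣ ram L :=
  Finset.dvd_lcm hk

lemma cast_numer_of_mem {L : Finset ℚ} {k : ℚ} (hk : k ∈ L) : (numer L k : ℚ) = k * ram L := by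
  obtain ⟨c, hc⟩ := den_dvd_ram hk
  have hint : k * ram L = ((k.num * c : ℤ) : ℚ) := by
    rw [hc]
    push_cast
    rw [← mul_assoc, Rat.mul_den_eq_num]
  rw [numer, hint, Rat.num_intCast]

lemma gSeg_empty (L : Finset ℚ) : gSeg L ∅ = ram L := by
  rw [gSeg, Finset.gcd_empty, Nat.gcd_zero_right]

lemma gSeg_insert (L : Finset ℚ) (k : ℚ) (t : Finset ℚ) :
    gSeg L (insert k t) = (numer L k).natAbs.gcd (gSeg L t) := by
  rw [gSeg, gSeg, Finset.gcd_insert, Nat.gcd_left_comm]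
  rfl

lemma gSeg_self (L : Finset ℚ) : gSeg L L = 1 := by
  set g := gSeg L L
  have hg_ram : g ∣ ram L := Nat.gcd_dvd_left _ _
  have hg0 : g ≠ 0 := Nat.pos_iff_ne_zero.mp (Nat.pos_of_dvd_of_pos hg_ram (ram_pos L))
  have hg_numer : ∀ k ∈ L, (g : ℤ) ∣ numer L k := fun k hk =>
    Int.natCast_dvd.mpr ((Nat.gcd_dvd_right _ _).trans (Finset.gcd_dvd hk))
  have hquot0 : ram L / g ≠ 0 := (Nat.div_ne_zero_iff_of_dvd hg_ram).mpr ⟨(ram_pos L).ne', hg0⟩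
  -- every `k ∈ L` is `(s_k / g) / (r / g)`, so `r / g` is a common denominator
  have hram_dvd : ram L ∣ ram L / g := Finset.lcm_dvd fun k hk => by
    obtain ⟨m, hm⟩ := hg_numer k hk
    refine Rat.den_dvd_of_mul_natCast_eq_intCast (m := m) hquot0 ?_
    have hgQ : (g : ℚ) ≠ 0 := by exact_mod_cast hg0
    rw [Nat.cast_div hg_ram hgQ, ← mul_div_assoc, ← cast_numer_of_mem hk, hm]
    push_cast
    field_simp
  have := Nat.dvd_antisymm (Nat.div_dvd_of_dvd hg_ram) hram_dvd
  exact (Nat.div_eq_self.mp this).resolve_left (ram_pos L).ne'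

lemma B_eq_sum_mul_sub_one (L : Finset ℚ) :
    B L = ∑ k ∈ L, ((gSeg L (L.filter (k < ·)) : ℤ) - gSeg L (L.filter (k ≤ ·)))
      * (numer L k - 1) - ram L * (ram L - 1) := by
  have htel := Finset.sum_sub_filter_lt_filter_le (fun s => (gSeg L s : ℤ)) L
  simp only [gSeg_empty, gSeg_self, Nat.cast_one] at htel
  simp only [B, mul_sub, mul_one, sum_sub_distrib, htel]
  ring

theorem stmt_6_general (L : Finset ℚ) : Even (B L) := by
  rw [B_eq_sum_mul_sub_one]
  refine (even_sum _ fun k hk => ?_).sub (Int.even_mul_pred_self _)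
  rw [filter_le_eq_insert_filter_lt hk, gSeg_insert]
  exact even_sub_gcd_mul_sub_one _ _

/-- for every level datum `L`, the integer `B_L` is even. -/
theorem stmt_6 (L : Finset ℚ) (hL : IsLevelDatum L) : Even (B L) :=
  stmt_6_general L
end

section
/- For every level datum L there exists an integer N ≥ 0 such that the N-th iterate M := S_∞^{[N]}(L) satisfies S_∞(M) = M; that is, the local simplification algorithm at infinity always terminates, reaching a level datum that is either empty, or has largest level < 1, or has largest level > 2. -/
open Finset

/-! A step of `S_∞` that does something has `ρ < σ < 2ρ`, and every rescaled level
`ρk/(σ−ρ) = s(k)/(σ−ρ)` has denominator dividing `σ − ρ < ρ`, so the ramification order strictly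
decreases and the iteration stops. Where it stops the largest level lies outside `(1, 2)`; it is
neither `1` nor `2` because "the largest level is not an integer" holds for a level datum
(`d₀ ≥ 2`) and survives each step, which discards the integer levels. -/

lemma Function.exists_iterate_not_of_decreasing {α : Type*} (f : α → α) (P C : α → Prop)
    (μ : α → ℕ) (hf : ∀ x, P x → C x → P (f x) ∧ μ (f x) < μ x) (x : α) (hx : P x) :
    ∃ N, P (f^[N] x) ∧ ¬C (f^[N] x) := by
  induction hμ : μ x using Nat.strong_induction_on generalizing x with
  | _ n ih =>
    by_cases hC : C x
    · obtain ⟨hPf, hlt⟩ := hf x hx hC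
      obtain ⟨N, hN⟩ := ih _ (hμ ▸ hlt) (f x) hPf rfl
      exact ⟨N + 1, by rwa [Function.iterate_succ_apply]⟩
    · exact ⟨0, hx, hC⟩

lemma maxLevel_eq_max' {L : Finset ℚ} (h : L.Nonempty) : maxLevel L = L.max' h := by
  rw [maxLevel, ← Finset.coe_max' h, WithBot.unbotD_coe]

lemma maxLevel_empty : maxLevel ∅ = 0 := rfl

lemma nonempty_of_one_lt_maxLevel {L : Finset ℚ} (h : 1 < maxLevel L) : L.Nonempty := by
  rw [Finset.nonempty_iff_ne_empty]
  rintro rfl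
  norm_num [maxLevel_empty] at h

lemma maxLevel_mem {L : Finset ℚ} (h : L.Nonempty) : maxLevel L ∈ L := by
  rw [maxLevel_eq_max' h]
  exact L.max'_mem h

lemma cast_numer {L : Finset ℚ} {x : ℚ} (hx : x ∈ L) :
    (numer L x : ℚ) = x * ram L := by
  obtain ⟨c, hc⟩ : x.den ∣ ram L := Finset.dvd_lcm hx
  have hint : x * ram L = ((x.num * c : ℤ) : ℚ) := by
    rw [hc]
    push_cast
    rw [← mul_assoc, Rat.mul_den_eq_num]
  rw [numer, hint, Rat.num_intCast]

lemma den_intCast_div_dvd (a b : ℤ) : ((a : ℚ) / b).den ∣ b.natAbs := by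
  have h := Rat.den_dvd a b
  rw [Rat.divInt_eq_div] at h
  exact Int.natCast_dvd.mp h

lemma ram_rescale_ram_div_dvd (L : Finset ℚ) (m : ℤ) :
    ram (rescale L (ram L / m)) ∣ m.natAbs := by
  refine Finset.lcm_dvd fun y hy => ?_
  obtain ⟨k, hk, rfl⟩ := Finset.mem_image.mp (Finset.mem_filter.mp hy).1
  have hkm : (ram L / m : ℚ) * k = (numer L k : ℚ) / m := by
    rw [cast_numer hk]
    ring
  rw [hkm]
  exact den_intCast_div_dvd _ _

lemma den_ne_one_of_mem_rescale {L : Finset ℚ} {c x : ℚ} (hx : x ∈ rescale L c) : x.den ≠ 1 :=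
  (Finset.mem_filter.mp hx).2

lemma Sinf_eq_self {L : Finset ℚ} (h : ¬(1 < maxLevel L ∧ maxLevel L < 2)) : Sinf L = L :=
  if_neg h

lemma ram_Sinf_lt {L : Finset ℚ} (hC : 1 < maxLevel L ∧ maxLevel L < 2) :
    ram (Sinf L) < ram L := by
  have hρ : (0 : ℚ) < ram L := by exact_mod_cast ram_pos L
  have hσ : (sigma0 L : ℚ) = maxLevel L * ram L :=
    cast_numer (maxLevel_mem (nonempty_of_one_lt_maxLevel hC.1))
  have hlower : (ram L : ℤ) < sigma0 L := by
    exact_mod_cast (show (ram L : ℚ) < sigma0 L by rw [hσ]; nlinarith [hC.1])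
  have hupper : sigma0 L < 2 * ram L := by
    exact_mod_cast (show (sigma0 L : ℚ) < 2 * ram L by rw [hσ]; nlinarith [hC.2])
  have hdvd := ram_rescale_ram_div_dvd L (sigma0 L - ram L)
  rw [Sinf, if_pos hC]
  push_cast at hdvd
  have := Nat.le_of_dvd (by omega) hdvd
  omega

def MaxLevelNotInt (L : Finset ℚ) : Prop := L.Nonempty → (maxLevel L).den ≠ 1

lemma IsLevelDatum.maxLevelNotInt {L : Finset ℚ} (hL : IsLevelDatum L) : MaxLevelNotInt L := by
  intro hne hden
  have hmem := maxLevel_mem hne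
  have htop : L.filter (fun x => maxLevel L ≤ x) = {maxLevel L} := by
    ext x
    simp only [Finset.mem_filter, Finset.mem_singleton]
    constructor
    · rintro ⟨hx, hle⟩
      rw [maxLevel_eq_max' hne] at hle ⊢
      exact le_antisymm (L.le_max' x hx) hle
    · rintro rfl
      exact ⟨hmem, le_rfl⟩
  have h2 := hL.2.1 _ hmem
  rw [segLcm, htop, Finset.lcm_singleton, normalize_eq, hden] at h2
  omega

lemma MaxLevelNotInt.Sinf {L : Finset ℚ} (hL : MaxLevelNotInt L) : MaxLevelNotInt (Sinf L) := by
  by_cases hC : 1 < maxLevel L ∧ maxLevel L < 2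
  · intro hne
    have hmem := maxLevel_mem hne
    rw [_root_.Sinf, if_pos hC] at hmem ⊢
    exact den_ne_one_of_mem_rescale hmem
  · rwa [Sinf_eq_self hC]

lemma MaxLevelNotInt.locallyMinimal {L : Finset ℚ} (hL : MaxLevelNotInt L)
    (hC : ¬(1 < maxLevel L ∧ maxLevel L < 2)) : LocallyMinimal L := by
  rcases L.eq_empty_or_nonempty with hempty | hne
  · exact Or.inl hempty
  have hden := hL hne
  have h1 : maxLevel L ≠ 1 := fun h => hden (by rw [h]; rfl)
  have h2 : maxLevel L ≠ 2 := fun h => hden (by rw [h]; rfl)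
  right
  by_contra! hmid
  exact hC ⟨lt_of_le_of_ne hmid.1 h1.symm, lt_of_le_of_ne hmid.2 h2⟩

/-- for every level datum `L`, the iteration of the local simplification
map `S_∞` stabilizes after finitely many steps, reaching a locally minimal level datum
(empty, or with largest level `< 1` or `> 2`). -/
theorem stmt_11 (L : Finset ℚ) (hL : IsLevelDatum L) :
    ∃ N : ℕ, Sinf (Sinf^[N] L) = Sinf^[N] L ∧ LocallyMinimal (Sinf^[N] L) := by
  obtain ⟨N, hinv, hstop⟩ := Function.exists_iterate_not_of_decreasing Sinf MaxLevelNotInt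
    (fun M => 1 < maxLevel M ∧ maxLevel M < 2) ram
    (fun _ hM hC => ⟨hM.Sinf, ram_Sinf_lt hC⟩) L hL.maxLevelNotInt
  exact ⟨N, Sinf_eq_self hstop, hinv.locallyMinimal hstop⟩
end
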